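/- arXiv:0910.5744 — 5 statements merged into one kernel-verified Lean document; each statement's English description precedes it below -/
import Mathlib

section
/- With non-increasing nonnegative weights, OWA is superadditive-in-differences: for all y, y' ∈ R^p, OWA(y − y') ≥ OWA(y) − OWA(y'). -/
noncomputable def sortedDesc {p : ℕ} (y : Fin p → ℝ) : Fin p → ℝ :=
  fun i => y (Tuple.sort y (Fin.rev i))

/-- Ordered weighted average: `owa w y = ∑ i, w i * y_(i)` where `y_(i)` is the
`i`-th largest component of `y`. -/
noncomputable def owa {p : ℕ} (w y : Fin p → ℝ) : ℝ :=
  ∑ i, w i * sortedDesc y i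

lemma sortedDesc_antitone {p : ℕ} (y : Fin p → ℝ) : Antitone (sortedDesc y) := by
  intro i j hij
  exact Tuple.monotone_sort y (Fin.rev_le_rev.2 hij)

/-- The permutation `i ↦ Tuple.sort y (Fin.rev i)` so that `sortedDesc y = y ∘ τ`. -/
noncomputable def descPerm {p : ℕ} (y : Fin p → ℝ) : Equiv.Perm (Fin p) :=
  (Fin.revPerm.trans (Tuple.sort y))

lemma sortedDesc_eq {p : ℕ} (y : Fin p → ℝ) (i : Fin p) :
    sortedDesc y i = y (descPerm y i) := rfl

lemma key {p : ℕ} (w : Fin p → ℝ) (hw : Antitone w) (y : Fin p → ℝ)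
    (σ : Equiv.Perm (Fin p)) :
    ∑ i, w i * y (σ i) ≤ owa w y := by
  have hmono : Monovary w (sortedDesc y) := by
    intro i j h
    by_contra hc
    push_neg at hc
    have : j < i := by
      by_contra hji
      push_neg at hji
      exact absurd (sortedDesc_antitone y hji) (not_le.2 h)
    exact absurd (hw this.le) (not_le.2 hc)
  have h := hmono.sum_mul_comp_perm_le_sum_mul (σ := (descPerm y)⁻¹ * σ)
  calc ∑ i, w i * y (σ i) = ∑ i, w i * sortedDesc y (((descPerm y)⁻¹ * σ) i) := by
        apply Finset.sum_congr rfl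
        intro i _
        rw [sortedDesc_eq]
        simp
    _ ≤ owa w y := h

theorem owa_superadditive_in_differences {p : ℕ} (w : Fin p → ℝ)
    (hw : Antitone w) (hw0 : ∀ i, 0 ≤ w i) (y y' : Fin p → ℝ) :
    owa w y - owa w y' ≤ owa w (fun i => y i - y' i) := by
  set z : Fin p → ℝ := fun i => y i - y' i with hz
  have hyz : y = fun i => z i + y' i := by funext i; simp [hz]
  have : owa w y ≤ owa w z + owa w y' := by
    have hsplit : owa w y = ∑ i, w i * z (descPerm y i) + ∑ i, w i * y' (descPerm y i) := by
      rw [owa, ← Finset.sum_add_distrib]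
      apply Finset.sum_congr rfl
      intro i _
      rw [sortedDesc_eq, hyz]
      ring
    rw [hsplit]
    exact add_le_add (key w hw z (descPerm y)) (key w hw y' (descPerm y))
  linarith
end

section
/- FPTAS reduction lemma: let T* minimize OWA(f(T)) over a finite set 𝒯 of spanning trees, and let 𝒯_ε ⊆ 𝒯 be such that for every T ∈ 𝒯 there is T_ε ∈ 𝒯_ε with f_i(T_ε) ≤ (1+ε) f_i(T) for all i. Then any T*_ε minimizing OWA(f(·)) over 𝒯_ε satisfies OWA(f(T*_ε)) ≤ (1+ε) OWA(f(T*)). -/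
lemma sort_mono_le {n : ℕ} {x y : Fin n → ℝ} (h : ∀ i, x i ≤ y i) (k : Fin n) :
    x (Tuple.sort x k) ≤ y (Tuple.sort y k) := by
  by_contra hc
  push_neg at hc
  have hmx : Monotone (x ∘ Tuple.sort x) := Tuple.monotone_sort x
  have hmy : Monotone (y ∘ Tuple.sort y) := Tuple.monotone_sort y
  set φ : Fin n → Fin n := fun j => (Tuple.sort x)⁻¹ (Tuple.sort y j) with hφ
  have hinj : Function.Injective φ := fun a b hab => by
    simpa using (Tuple.sort y).injective ((Tuple.sort x)⁻¹.injective hab)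
  have hmap : ∀ j ∈ Finset.Iic k, φ j ∈ Finset.Iio k := by
    intro j hj
    simp only [Finset.mem_Iic] at hj
    have h1 : x (Tuple.sort x (φ j)) < x (Tuple.sort x k) := by
      have : x (Tuple.sort y j) ≤ y (Tuple.sort y j) := h _
      have h2 : y (Tuple.sort y j) ≤ y (Tuple.sort y k) := hmy hj
      simpa [hφ] using lt_of_le_of_lt (this.trans h2) hc
    simp only [Finset.mem_Iio]
    by_contra hk
    push_neg at hk
    exact absurd (hmx hk) (not_le.mpr h1)
  have := Finset.card_le_card_of_injOn φ hmap (Function.Injective.injOn hinj)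
  rw [Fin.card_Iic, Fin.card_Iio] at this
  omega

lemma sortedDesc_mono {n : ℕ} {x y : Fin n → ℝ} (h : ∀ i, x i ≤ y i) (i : Fin n) :
    sortedDesc x i ≤ sortedDesc y i := sort_mono_le h _

lemma sortedDesc_smul {n : ℕ} (c : ℝ) (hc : 0 ≤ c) (y : Fin n → ℝ) (i : Fin n) :
    sortedDesc (fun j => c * y j) i = c * sortedDesc y i := by
  set g : Fin n → ℝ := fun j => c * y j with hg
  have hmono : Monotone (g ∘ Tuple.sort y) := by
    intro a b hab
    exact mul_le_mul_of_nonneg_left (Tuple.monotone_sort y hab) hc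
  have := (Tuple.comp_sort_eq_comp_iff_monotone (f := g) (σ := Tuple.sort y)).mpr hmono
  have h2 : g (Tuple.sort y (Fin.rev i)) = g (Tuple.sort g (Fin.rev i)) :=
    congrFun this (Fin.rev i)
  simp only [sortedDesc, hg] at h2 ⊢
  exact h2.symm

lemma owa_mono {n : ℕ} {w x y : Fin n → ℝ} (hw : ∀ i, 0 ≤ w i) (h : ∀ i, x i ≤ y i) :
    owa w x ≤ owa w y :=
  Finset.sum_le_sum fun i _ =>
    mul_le_mul_of_nonneg_left (sortedDesc_mono h i) (hw i)

theorem fptas_reduction {ι : Type*} {p : ℕ} (w : Fin p → ℝ) (hw0 : ∀ i, 0 ≤ w i)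
    (𝒯 𝒯ε : Finset ι) (h𝒯 : 𝒯.Nonempty) (hsub : 𝒯ε ⊆ 𝒯) (h𝒯ε : 𝒯ε.Nonempty)
    (f : ι → Fin p → ℝ) (hf : ∀ T ∈ 𝒯, ∀ i, 0 ≤ f T i)
    (ε : ℝ) (hε : 0 ≤ ε)
    (hcov : ∀ T ∈ 𝒯, ∃ Tε ∈ 𝒯ε, ∀ i, f Tε i ≤ (1 + ε) * f T i)
    (Tstar : ι) (hTstar : Tstar ∈ 𝒯)
    (hTstarMin : ∀ T ∈ 𝒯, owa w (f Tstar) ≤ owa w (f T))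
    (Tsε : ι) (hTsε : Tsε ∈ 𝒯ε)
    (hTsεMin : ∀ T ∈ 𝒯ε, owa w (f Tsε) ≤ owa w (f T)) :
    owa w (f Tsε) ≤ (1 + ε) * owa w (f Tstar) := by
  obtain ⟨Tε, hTε, hle⟩ := hcov Tstar hTstar
  have h1 : owa w (f Tsε) ≤ owa w (f Tε) := hTsεMin Tε hTε
  have h2 : owa w (f Tε) ≤ owa w (fun i => (1 + ε) * f Tstar i) := owa_mono hw0 hle
  have h3 : owa w (fun i => (1 + ε) * f Tstar i) = (1 + ε) * owa w (f Tstar) := by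
    unfold owa
    rw [Finset.mul_sum]
    refine Finset.sum_congr rfl fun i _ => ?_
    rw [sortedDesc_smul (1 + ε) (by linarith) (f Tstar) i]
    ring
  linarith
end

section
/- Sorting-permutation invariance of the relaxed lower bound (Proposition 1): let b ∈ R^p and b_0 ∈ R, and for a permutation π of {1,...,p} let F(π) be the set of y ∈ R^p with y_{π(1)} ≥ ... ≥ y_{π(p)}, y_i ≥ b_i for all i, and Σ_i y_i ≥ b_0. Let π* be a permutation with b_{π*(1)} ≥ ... ≥ b_{π*(p)}. Then for any permutation π and any y ∈ F(π), there exists y' ∈ F(π*) with OWA(y') = OWA(y). -/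
/-- Feasible set of the relaxed problem restricted to the comonotonic cone of `π`. -/
def Fset {p : ℕ} (b : Fin p → ℝ) (b0 : ℝ) (π : Equiv.Perm (Fin p)) : Set (Fin p → ℝ) :=
  {y | (∀ i j : Fin p, i ≤ j → y (π j) ≤ y (π i)) ∧ (∀ i, b i ≤ y i) ∧ b0 ≤ ∑ i, y i}

lemma sortedDesc_comp_perm {p : ℕ} (y : Fin p → ℝ) (σ : Equiv.Perm (Fin p)) :
    sortedDesc (y ∘ σ) = sortedDesc y := by
  funext i
  have h := Tuple.comp_perm_comp_sort_eq_comp_sort (f := y) (σ := σ)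
  have := congrFun h (Fin.rev i)
  simpa [sortedDesc, Function.comp] using this

theorem sorting_permutation_invariance {p : ℕ} (w b : Fin p → ℝ) (b0 : ℝ)
    (πs : Equiv.Perm (Fin p)) (hπs : ∀ i j : Fin p, i ≤ j → b (πs j) ≤ b (πs i))
    (π : Equiv.Perm (Fin p)) (y : Fin p → ℝ) (hy : y ∈ Fset b b0 π) :
    ∃ y' ∈ Fset b b0 πs, owa w y' = owa w y := by
  obtain ⟨hmono, hb, hsum⟩ := hy
  set σ : Equiv.Perm (Fin p) := πs.symm.trans π with hσ
  refine ⟨y ∘ σ, ⟨?_, ?_, ?_⟩, ?_⟩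
  · intro i j hij
    simpa [hσ, Function.comp] using hmono i j hij
  · intro i
    -- key order-statistics comparison
    set j : Fin p := πs.symm i with hj
    have hi : i = πs j := by simp [hj]
    -- S = image of π on Ici j, T = image of πs on Iic j intersect
    have hinter : ((Finset.Ici j).image π ∩ (Finset.Iic j).image πs).Nonempty := by
      by_contra hempty
      rw [Finset.not_nonempty_iff_eq_empty] at hempty
      have hcard : ((Finset.Ici j).image π).card + ((Finset.Iic j).image πs).card =
          ((Finset.Ici j).image π ∪ (Finset.Iic j).image πs).card := by
        rw [← Finset.card_union_add_card_inter, hempty, Finset.card_empty, add_zero]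
      have h1 : ((Finset.Ici j).image π).card = p - (j : ℕ) := by
        rw [Finset.card_image_of_injective _ π.injective, Fin.card_Ici]
      have h2 : ((Finset.Iic j).image πs).card = (j : ℕ) + 1 := by
        rw [Finset.card_image_of_injective _ πs.injective, Fin.card_Iic]
      have hle : ((Finset.Ici j).image π ∪ (Finset.Iic j).image πs).card ≤ p := by
        simpa using Finset.card_le_univ ((Finset.Ici j).image π ∪ (Finset.Iic j).image πs)
      have hjp : (j : ℕ) < p := j.isLt
      omega
    obtain ⟨k, hk⟩ := hinter
    rw [Finset.mem_inter, Finset.mem_image, Finset.mem_image] at hk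
    obtain ⟨⟨a, ha, hka⟩, ⟨c, hc, hkc⟩⟩ := hk
    have hya : y k ≤ y (π j) := hka ▸ hmono j a (Finset.mem_Ici.mp ha)
    have hbc : b (πs j) ≤ b k := hkc ▸ hπs c j (Finset.mem_Iic.mp hc)
    have : b (πs j) ≤ y (π j) := le_trans hbc (le_trans (hb k) hya)
    simpa [hi, hσ, Function.comp] using this
  · have : ∑ i, (y ∘ σ) i = ∑ i, y i := Equiv.sum_comp σ y
    exact this ▸ hsum
  · unfold owa
    rw [sortedDesc_comp_perm]
end

section
/- Consequently, min over all permutations π of the minimum of OWA over F(π) is attained at π*: min_{y ∈ ∪_π F(π)} OWA(y) = min_{y ∈ F(π*)} OWA(y), whenever the minima exist. -/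
/-- Pointwise domination is preserved by sorting. -/
lemma sorted_le_sorted {p : ℕ} {f g : Fin p → ℝ} (h : ∀ i, f i ≤ g i) (i : Fin p) :
    f (Tuple.sort f i) ≤ g (Tuple.sort g i) := by
  classical
  set T : Finset (Fin p) := (Finset.Iic i).image (Tuple.sort g) with hT
  set T' : Finset (Fin p) := T.image (Tuple.sort f).symm with hT'
  have hcardT : T.card = (i : ℕ) + 1 := by
    rw [hT, Finset.card_image_of_injective _ (Tuple.sort g).injective, Fin.card_Iic]
  have hcardT' : T'.card = (i : ℕ) + 1 := by
    rw [hT', Finset.card_image_of_injective _ (Tuple.sort f).symm.injective, hcardT]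
  have : ∃ k ∈ T', i ≤ k := by
    by_contra hcon
    push_neg at hcon
    have hsub : T' ⊆ Finset.Iio i := fun k hk => Finset.mem_Iio.mpr (hcon k hk)
    have := Finset.card_le_card hsub
    rw [hcardT', Fin.card_Iio] at this
    omega
  obtain ⟨k, hkT', hik⟩ := this
  obtain ⟨s, hsT, hks⟩ := Finset.mem_image.mp hkT'
  obtain ⟨j, hj, hjs⟩ := Finset.mem_image.mp hsT
  have h1 : f (Tuple.sort f i) ≤ f (Tuple.sort f k) := Tuple.monotone_sort f hik
  have h2 : Tuple.sort f k = s := by rw [← hks]; simp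
  have h3 : g s ≤ g (Tuple.sort g i) := by
    rw [← hjs]; exact Tuple.monotone_sort g (Finset.mem_Iic.mp hj)
  calc f (Tuple.sort f i) ≤ f (Tuple.sort f k) := h1
    _ = f s := by rw [h2]
    _ ≤ g s := h s
    _ ≤ g (Tuple.sort g i) := h3

theorem min_attained_at_sorting_perm {p : ℕ} (w b : Fin p → ℝ) (hw0 : ∀ i, 0 ≤ w i)
    (b0 : ℝ)
    (πs : Equiv.Perm (Fin p)) (hπs : ∀ i j : Fin p, i ≤ j → b (πs j) ≤ b (πs i))
    (m m' : ℝ)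
    (hm : IsLeast (owa w '' {y : Fin p → ℝ | (∀ i, b i ≤ y i) ∧ b0 ≤ ∑ i, y i}) m)
    (hm' : IsLeast (owa w '' Fset b b0 πs) m') :
    m = m' := by
  classical
  -- m ≤ m'
  have hle : m ≤ m' := by
    obtain ⟨y, hy, hy'⟩ := hm'.1
    exact hy' ▸ hm.2 ⟨y, ⟨hy.2.1, hy.2.2⟩, rfl⟩
  -- m' ≤ m
  obtain ⟨y, ⟨hyb, hysum⟩, hym⟩ := hm.1
  -- the sorted-descending rearrangement of y, arranged along πs
  set y' : Fin p → ℝ := fun i => sortedDesc y (πs.symm i) with hy'def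
  -- y' as a permutation of y
  set τ : Equiv.Perm (Fin p) := πs.symm.trans (Fin.revPerm.trans (Tuple.sort y)) with hτ
  have hyτ : y' = y ∘ τ := by
    funext i
    simp [hy'def, hτ, sortedDesc, Equiv.trans_apply]
  -- b sorted descending agrees with b ∘ πs
  have hbsort : ∀ k, sortedDesc b k = b (πs k) := by
    intro k
    have hmono : Monotone (b ∘ (Fin.revPerm.trans πs : Equiv.Perm (Fin p))) := by
      intro i j hij
      exact hπs _ _ (by simpa using Fin.rev_le_rev.mpr hij)
    have := Tuple.comp_sort_eq_comp_iff_monotone.mpr hmono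
    have h2 := congrFun this (Fin.rev k)
    simp only [Function.comp_apply, Equiv.trans_apply, Fin.revPerm_apply, Fin.rev_rev] at h2
    simpa [sortedDesc] using h2.symm
  have hy'mem : y' ∈ Fset b b0 πs := by
    refine ⟨?_, ?_, ?_⟩
    · intro i j hij
      simp only [hy'def, Equiv.symm_apply_apply]
      exact Tuple.monotone_sort y (Fin.rev_le_rev.mpr hij)
    · intro i
      have := hbsort (πs.symm i)
      simp only [Equiv.apply_symm_apply] at this
      rw [hy'def, ← this]
      exact sorted_le_sorted hyb _
    · have : ∑ i, y' i = ∑ i, y i := by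
        rw [hyτ]
        simpa using Equiv.sum_comp τ y
      rw [this]; exact hysum
  -- owa is invariant under permutation
  have howa : owa w y' = owa w y := by
    have : sortedDesc y' = sortedDesc y := by
      funext i
      have := congrFun (Tuple.comp_perm_comp_sort_eq_comp_sort (σ := τ) (f := y)) (Fin.rev i)
      simp only [Function.comp_apply] at this
      simp [sortedDesc, hyτ, this]
    unfold owa
    rw [this]
  have : m' ≤ owa w y' := hm'.2 ⟨y', hy'mem, rfl⟩
  rw [howa, hym] at this
  linarith
end

section
/- If an instance admits a permutation π of the objectives with v^e_{π(1)} ≥ ... ≥ v^e_{π(p)} for every edge e, then a spanning tree minimizing the scalar cost Σ_{e∈T} Σ_i w_i v^e_{π(i)} also minimizes OWA(f(T)) over all spanning trees (for nonnegative weights w), because for every spanning tree T the components of f(T) are already comonotonically ordered: f_{π(1)}(T) ≥ ... ≥ f_{π(p)}(T), hence OWA(f(T)) = Σ_i w_i f_{π(i)}(T). -/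
/-- The vector cost of a subgraph: sum of the edge cost vectors over its edges. -/
noncomputable def cost {V : Type*} [Fintype V] {p : ℕ} (v : Sym2 V → Fin p → ℝ)
    (T : SimpleGraph V) : Fin p → ℝ :=
  ∑ e ∈ T.edgeSet.toFinite.toFinset, v e

lemma sortedDesc_of_antitone {p : ℕ} (y : Fin p → ℝ) (π : Equiv.Perm (Fin p))
    (hy : ∀ i j : Fin p, i ≤ j → y (π j) ≤ y (π i)) :
    ∀ i, sortedDesc y i = y (π i) := by
  set σ : Equiv.Perm (Fin p) := Fin.revPerm.trans π with hσ
  have hmono : Monotone (y ∘ σ) := by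
    intro i j hij
    exact hy _ _ ((Fin.rev_le_rev).2 hij)
  have h := (Tuple.comp_sort_eq_comp_iff_monotone (f := y) (σ := σ)).2 hmono
  intro i
  have := congrFun h (Fin.rev i)
  simpa [sortedDesc, σ, Function.comp] using this.symm

theorem comonotone_instance_reduces_to_scalar {V : Type*} [Fintype V] {p : ℕ}
    (G : SimpleGraph V) (hG : G.Connected)
    (v : Sym2 V → Fin p → ℝ) (w : Fin p → ℝ) (hw0 : ∀ i, 0 ≤ w i)
    (π : Equiv.Perm (Fin p))
    (hcomon : ∀ e ∈ G.edgeSet, ∀ i j : Fin p, i ≤ j → v e (π j) ≤ v e (π i))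
    (T : SimpleGraph V) (hTG : T ≤ G) (hT : T.IsTree)
    (hmin : ∀ T' : SimpleGraph V, T' ≤ G → T'.IsTree →
      (∑ i, w i * cost v T (π i)) ≤ ∑ i, w i * cost v T' (π i)) :
    (∀ T' : SimpleGraph V, T' ≤ G → T'.IsTree →
        owa w (cost v T') = ∑ i, w i * cost v T' (π i)) ∧
    ∀ T' : SimpleGraph V, T' ≤ G → T'.IsTree →
      owa w (cost v T) ≤ owa w (cost v T') := by
  have key : ∀ T' : SimpleGraph V, T' ≤ G →
      owa w (cost v T') = ∑ i, w i * cost v T' (π i) := by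
    intro T' hT'G
    have hanti : ∀ i j : Fin p, i ≤ j → cost v T' (π j) ≤ cost v T' (π i) := by
      intro i j hij
      simp only [cost, Finset.sum_apply]
      apply Finset.sum_le_sum
      intro e he
      have heG : e ∈ G.edgeSet := by
        have := SimpleGraph.edgeSet_mono hT'G
        exact this ((Set.Finite.mem_toFinset _).1 he)
      exact hcomon e heG i j hij
    have := sortedDesc_of_antitone (cost v T') π hanti
    unfold owa
    exact Finset.sum_congr rfl fun i _ => by rw [this i]
  refine ⟨fun T' hT'G _ => key T' hT'G, fun T' hT'G hT' => ?_⟩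
  rw [key T hTG, key T' hT'G]
  exact hmin T' hT'G hT'
end
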